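/- arXiv:1904.06555 — 4 statements merged into one kernel-verified Lean document; each statement's English description precedes it below -/
import Mathlib

section
/- Let P be an integer with P > 2, let a = (P + √(P² − 4))/2 ∈ ℝ, and for n ≥ 1 define R_n = (2·∑_{k=0}^{n} U_k(P,1) − U_n(P,1)) / U_n(P,1) ∈ ℝ. Then for every n ≥ 2, R_n − R_{n−1} = 2(a^{n+1} − a^{n−1}) / ((a − 1)(a^n + 1)(a^{n−1} + 1)). -/
set_option maxHeartbeats 1000000

/-- Lucas sequence of the first kind: `U 0 = 0`, `U 1 = 1`,
`U (n+2) = P * U (n+1) - Q * U n`. -/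
def lucasU (P Q : ℤ) : ℕ → ℤ
  | 0 => 0
  | 1 => 1
  | (n + 2) => P * lucasU P Q (n + 1) - Q * lucasU P Q n

lemma lucasU_closed (P : ℤ) (a : ℝ) (hq : a ^ 2 = P * a - 1) :
    ∀ n : ℕ, (lucasU P 1 n : ℝ) * ((a ^ 2 - 1) * a ^ n) = a ^ (2 * n + 1) - a := by
  intro n
  induction n using Nat.twoStepInduction with
  | zero => simp [lucasU]
  | one => simp [lucasU]; ring
  | more n ih1 ih2 =>
      have h : (lucasU P 1 (n + 2) : ℝ) = P * lucasU P 1 (n + 1) - lucasU P 1 n := by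
        rw [show lucasU P 1 (n + 2) = P * lucasU P 1 (n + 1) - 1 * lucasU P 1 n from rfl]
        push_cast; ring
      rw [h]
      linear_combination ((P : ℝ) * a) * ih2 - a ^ 2 * ih1 + (a - a ^ (2 * n + 3)) * hq

lemma sum_lucas (P : ℤ) : ∀ n : ℕ,
    (P - 2) * ∑ k ∈ Finset.range (n + 1), lucasU P 1 k =
      lucasU P 1 (n + 1) - lucasU P 1 n - 1 := by
  intro n
  induction n with
  | zero => simp [lucasU]
  | succ n ih =>
      rw [Finset.sum_range_succ, mul_add, ih,
        show lucasU P 1 (n + 2) = P * lucasU P 1 (n + 1) - 1 * lucasU P 1 n from rfl]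
      ring

theorem ratio_difference (P : ℤ) (hP : 2 < P) (a : ℝ)
    (ha : a = ((P : ℝ) + Real.sqrt ((P : ℝ) ^ 2 - 4)) / 2) (R : ℕ → ℝ)
    (hR : ∀ n : ℕ, 1 ≤ n →
      R n = (2 * ∑ k ∈ Finset.range (n + 1), (lucasU P 1 k : ℝ) - (lucasU P 1 n : ℝ)) /
        (lucasU P 1 n : ℝ)) :
    ∀ n : ℕ, 2 ≤ n →
      R n - R (n - 1) =
        2 * (a ^ (n + 1) - a ^ (n - 1)) /
          ((a - 1) * (a ^ n + 1) * (a ^ (n - 1) + 1)) := by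
  have hP3 : (3 : ℝ) ≤ (P : ℝ) := by exact_mod_cast hP
  have hsq : Real.sqrt ((P : ℝ) ^ 2 - 4) ^ 2 = (P : ℝ) ^ 2 - 4 :=
    Real.sq_sqrt (by nlinarith)
  have hq : a ^ 2 = (P : ℝ) * a - 1 := by
    rw [ha]; nlinarith [hsq]
  have ha1 : 1 < a := by
    have := Real.sqrt_nonneg ((P : ℝ) ^ 2 - 4)
    rw [ha]; linarith
  have ha0 : (0 : ℝ) < a := by linarith
  have hane : a ≠ 0 := ne_of_gt ha0
  intro n hn
  obtain ⟨m, rfl⟩ : ∃ m, n = m + 1 := ⟨n - 1, by omega⟩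
  have hm : 1 ≤ m := by omega
  simp only [Nat.add_sub_cancel]
  rw [hR (m + 1) (by omega), hR m hm]
  have hx1 : 1 < a ^ m := one_lt_pow₀ ha1 (by omega)
  have hx0 : (0 : ℝ) < a ^ m := by linarith
  have h1 := lucasU_closed P a hq m
  have h2 := lucasU_closed P a hq (m + 1)
  have e0 : a ^ (2 * m + 1) = (a ^ m) ^ 2 * a := by ring
  have e1 : a ^ (2 * (m + 1) + 1) = (a ^ m) ^ 2 * a ^ 3 := by ring
  have e2 : a ^ (m + 1) = a ^ m * a := by ring
  have e3 : a ^ (m + 1 + 1) = a ^ m * a ^ 2 := by ring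
  rw [e0] at h1
  rw [e1, e2] at h2
  -- h1 : u * ((a^2-1) * a^m) = (a^m)^2 * a - a
  -- h2 : v * ((a^2-1) * (a^m * a)) = (a^m)^2 * a^3 - a
  have hne2 : a ^ 2 - 1 ≠ 0 := by nlinarith
  have ha1' : a - 1 ≠ 0 := by linarith
  have h2' : (lucasU P 1 (m + 1) : ℝ) * ((a ^ 2 - 1) * a ^ m) =
      (a ^ m) ^ 2 * a ^ 2 - 1 := by
    apply mul_right_cancel₀ hane
    linear_combination h2
  have hnum1 : (0:ℝ) < (a ^ m) ^ 2 - 1 := by nlinarith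
  have hxa : 1 < a ^ m * a := by nlinarith
  have hnum2 : (0:ℝ) < (a ^ m) ^ 2 * a ^ 2 - 1 := by nlinarith [hxa]
  have hu : (lucasU P 1 m : ℝ) = a * ((a ^ m) ^ 2 - 1) / ((a ^ 2 - 1) * a ^ m) := by
    rw [eq_div_iff (by positivity)]; linarith [h1]
  have hv : (lucasU P 1 (m + 1) : ℝ) =
      ((a ^ m) ^ 2 * a ^ 2 - 1) / ((a ^ 2 - 1) * a ^ m) := by
    rw [eq_div_iff (by positivity)]; linarith [h2']
  have h3 : ((P : ℝ) - 2) * ∑ k ∈ Finset.range (m + 1), (lucasU P 1 k : ℝ) =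
      (lucasU P 1 (m + 1) : ℝ) - (lucasU P 1 m : ℝ) - 1 := by
    exact_mod_cast congrArg (Int.cast : ℤ → ℝ) (sum_lucas P m)
  have hs2 : (∑ k ∈ Finset.range (m + 1), (lucasU P 1 k : ℝ)) =
      a * (a ^ m - 1) * (a ^ m * a - 1) / ((a ^ 2 - 1) * (a - 1) * a ^ m) := by
    rw [eq_div_iff (by positivity)]
    apply mul_right_cancel₀ ha1'
    linear_combination ((∑ k ∈ Finset.range (m + 1), (lucasU P 1 k : ℝ)) * (a ^ 2 - 1) * a ^ m) * hq
      + (a * (a ^ 2 - 1) * a ^ m) * h3 + a * h2' - a * h1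
  have hune : (lucasU P 1 m : ℝ) ≠ 0 := by
    rw [hu]; exact div_ne_zero (by positivity) (by positivity)
  have hvne : (lucasU P 1 (m + 1) : ℝ) ≠ 0 := by
    rw [hv]; exact div_ne_zero (ne_of_gt hnum2) (by positivity)
  have hxa1 : a ^ m * a + 1 ≠ 0 := by positivity
  have hx1' : a ^ m + 1 ≠ 0 := by positivity
  rw [Finset.sum_range_succ, hs2, hu, hv, e2, e3]
  have hnum2' : a ^ 2 * (a ^ m) ^ 2 - 1 ≠ 0 := by nlinarith
  field_simp
  ring
end

section
/- Let P be an integer with P > 2, and for n ≥ 1 define R_n = (2·∑_{k=0}^{n} U_k(P,1) − U_n(P,1)) / U_n(P,1) ∈ ℝ. Then the sequence (R_n)_{n≥1} is strictly increasing: R_{n−1} < R_n for every n ≥ 2. -/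
lemma lucasU_mono (P : ℤ) (hP : 2 < P) :
    ∀ n : ℕ, lucasU P 1 n < lucasU P 1 (n + 1) ∧ 0 ≤ lucasU P 1 n := by
  intro n
  induction n with
  | zero => simp [lucasU]
  | succ m ih =>
    obtain ⟨h1, h2⟩ := ih
    have hpos : 0 < lucasU P 1 (m + 1) := lt_of_le_of_lt h2 h1
    constructor
    · show lucasU P 1 (m + 1) < lucasU P 1 (m + 2)
      rw [show lucasU P 1 (m + 2) = P * lucasU P 1 (m + 1) - 1 * lucasU P 1 m from rfl]
      nlinarith
    · linarith

lemma lucasU_pos (P : ℤ) (hP : 2 < P) (n : ℕ) (hn : 1 ≤ n) : 0 < lucasU P 1 n := by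
  obtain ⟨m, rfl⟩ := Nat.exists_eq_add_of_le hn
  have := lucasU_mono P hP m
  calc (0 : ℤ) ≤ lucasU P 1 m := this.2
    _ < lucasU P 1 (m + 1) := this.1
    _ = lucasU P 1 (1 + m) := by ring_nf

lemma lucasU_gap (P : ℤ) (hP : 2 < P) (m : ℕ) :
    2 ≤ lucasU P 1 (m + 2) - lucasU P 1 (m + 1) := by
  have h := lucasU_mono P hP m
  have hpos : 0 < lucasU P 1 (m + 1) := lt_of_le_of_lt h.2 h.1
  rw [show lucasU P 1 (m + 2) = P * lucasU P 1 (m + 1) - 1 * lucasU P 1 m from rfl]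
  nlinarith [h.1, h.2]

lemma lucasU_sum (P : ℤ) (n : ℕ) :
    (P - 2) * ∑ k ∈ Finset.range (n + 1), lucasU P 1 k =
      lucasU P 1 (n + 1) - lucasU P 1 n - 1 := by
  induction n with
  | zero => simp [lucasU]
  | succ m ih =>
    rw [Finset.sum_range_succ, mul_add, ih,
      show lucasU P 1 (m + 2) = P * lucasU P 1 (m + 1) - 1 * lucasU P 1 m from rfl]
    ring

lemma lucasU_catalan (P : ℤ) (n : ℕ) :
    lucasU P 1 (n + 2) * lucasU P 1 n - lucasU P 1 (n + 1) ^ 2 = -1 := by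
  induction n with
  | zero => simp [lucasU]
  | succ m ih =>
    rw [show lucasU P 1 (m + 3) = P * lucasU P 1 (m + 2) - 1 * lucasU P 1 (m + 1) from rfl]
      at *
    rw [show lucasU P 1 (m + 2) = P * lucasU P 1 (m + 1) - 1 * lucasU P 1 m from rfl] at *
    nlinarith [ih]

theorem ratio_strict_mono (P : ℤ) (hP : 2 < P) (R : ℕ → ℝ)
    (hR : ∀ n : ℕ, 1 ≤ n →
      R n = (2 * ∑ k ∈ Finset.range (n + 1), (lucasU P 1 k : ℝ) - (lucasU P 1 n : ℝ)) /
        (lucasU P 1 n : ℝ)) :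
    ∀ n : ℕ, 2 ≤ n → R (n - 1) < R n := by
  intro n hn
  obtain ⟨m, rfl⟩ : ∃ m, n = m + 2 := ⟨n - 2, by omega⟩
  have hm1 : (m + 2) - 1 = m + 1 := rfl
  rw [hm1, hR (m + 1) (by omega), hR (m + 2) (by omega)]
  -- key integer inequality
  set Sm : ℤ := ∑ k ∈ Finset.range (m + 2), lucasU P 1 k with hSm
  set Sn : ℤ := ∑ k ∈ Finset.range (m + 3), lucasU P 1 k with hSn
  have hSnSm : Sn = Sm + lucasU P 1 (m + 2) := by
    rw [hSn, hSm, Finset.sum_range_succ]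
  have hsum1 : (P - 2) * Sm = lucasU P 1 (m + 2) - lucasU P 1 (m + 1) - 1 :=
    lucasU_sum P (m + 1)
  have hcat : lucasU P 1 (m + 3) * lucasU P 1 (m + 1) - lucasU P 1 (m + 2) ^ 2 = -1 :=
    lucasU_catalan P (m + 1)
  have hgap : 2 ≤ lucasU P 1 (m + 2) - lucasU P 1 (m + 1) := lucasU_gap P hP m
  have hsum2 : (P - 2) * Sn = lucasU P 1 (m + 3) - lucasU P 1 (m + 2) - 1 :=
    lucasU_sum P (m + 2)
  have hkey : Sm * lucasU P 1 (m + 2) < Sn * lucasU P 1 (m + 1) := by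
    have hP2 : 0 < P - 2 := by omega
    have h : (P - 2) * (Sn * lucasU P 1 (m + 1) - Sm * lucasU P 1 (m + 2)) =
        -1 + (lucasU P 1 (m + 2) - lucasU P 1 (m + 1)) := by
      linear_combination lucasU P 1 (m + 1) * hsum2 - lucasU P 1 (m + 2) * hsum1 + hcat
    nlinarith [h, hgap, hP2]
  -- now transfer to ℝ
  have hUm1 : (0 : ℝ) < (lucasU P 1 (m + 1) : ℝ) := by
    exact_mod_cast lucasU_pos P hP (m + 1) (by omega)
  have hUm2 : (0 : ℝ) < (lucasU P 1 (m + 2) : ℝ) := by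
    exact_mod_cast lucasU_pos P hP (m + 2) (by omega)
  rw [div_lt_div_iff₀ hUm1 hUm2]
  have hcastm : (∑ k ∈ Finset.range (m + 2), (lucasU P 1 k : ℝ)) = (Sm : ℝ) := by
    rw [hSm]; push_cast; ring
  have hcastn : (∑ k ∈ Finset.range (m + 3), (lucasU P 1 k : ℝ)) = (Sn : ℝ) := by
    rw [hSn]; push_cast; ring
  rw [hcastm, hcastn]
  have hkeyR : (Sm : ℝ) * (lucasU P 1 (m + 2) : ℝ) < (Sn : ℝ) * (lucasU P 1 (m + 1) : ℝ) := by
    exact_mod_cast hkey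
  nlinarith [hkeyR]
end

section
/- Let P be an integer with P > 2, and for n ≥ 1 define R_n = (2·∑_{k=0}^{n} U_k(P,1) − U_n(P,1)) / U_n(P,1) ∈ ℝ. Then the sequence (R_n)_{n≥1} converges as n → ∞ to √((P+2)/(P−2)). -/
set_option maxHeartbeats 1000000 in
theorem ratio_tendsto (P : ℤ) (hP : 2 < P) (R : ℕ → ℝ)
    (hR : ∀ n : ℕ, 1 ≤ n →
      R n = (2 * ∑ k ∈ Finset.range (n + 1), (lucasU P 1 k : ℝ) - (lucasU P 1 n : ℝ)) /
        (lucasU P 1 n : ℝ)) :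
    Filter.Tendsto R Filter.atTop
      (nhds (Real.sqrt (((P : ℝ) + 2) / ((P : ℝ) - 2)))) := by
  have hP2 : (2:ℝ) < (P:ℝ) := by exact_mod_cast hP
  have hD : (0:ℝ) < (P:ℝ)^2 - 4 := by nlinarith
  set sD := Real.sqrt ((P:ℝ)^2 - 4) with hsDdef
  have hsD2 : sD^2 = (P:ℝ)^2 - 4 := Real.sq_sqrt hD.le
  have hsDpos : 0 < sD := Real.sqrt_pos.2 hD
  clear_value sD
  set a : ℝ := ((P:ℝ) + sD)/2 with hadef
  set b : ℝ := ((P:ℝ) - sD)/2 with hbdef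
  have hab : a * b = 1 := by rw [hadef, hbdef]; nlinarith [hsD2]
  have haddb : a + b = (P:ℝ) := by rw [hadef, hbdef]; ring
  have hsub : a - b = sD := by rw [hadef, hbdef]; ring
  have hsDlt : sD < (P:ℝ) := by nlinarith [hsD2, hsDpos]
  have hbpos : 0 < b := by rw [hbdef]; linarith
  clear_value a b
  have ha1 : 1 < a := by nlinarith [hab, hbpos, hsDpos, hsub]
  have hb1 : b < 1 := by nlinarith [hab, hbpos, ha1]
  -- closed form
  have key : ∀ n : ℕ, (lucasU P 1 n : ℝ) * sD = a^n - b^n := by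
    intro n
    induction n using Nat.twoStepInduction with
    | zero => simp [lucasU]
    | one => simp [lucasU]; linarith [hsub]
    | more n ih0 ih1 =>
      have ha2 : a^2 = (P:ℝ)*a - 1 := by nlinarith [hab, haddb]
      have hb2 : b^2 = (P:ℝ)*b - 1 := by nlinarith [hab, haddb]
      show (lucasU P 1 (n+2) : ℝ) * sD = a^(n+2) - b^(n+2)
      rw [lucasU]
      push_cast
      linear_combination (P:ℝ) * ih1 - ih0 - a^n * ha2 + b^n * hb2
  -- sum formula over ℤ
  have hsum : ∀ n : ℕ, ((P:ℤ) - 2) * ∑ k ∈ Finset.range (n+1), lucasU P 1 k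
      = lucasU P 1 (n+1) - lucasU P 1 n - 1 := by
    intro n
    induction n with
    | zero => simp [lucasU]
    | succ n ih =>
      rw [Finset.sum_range_succ]
      show ((P:ℤ) - 2) * _ = lucasU P 1 (n+2) - _ - 1
      rw [lucasU]
      linear_combination ih
  -- explicit formula for R
  have hform : ∀ n : ℕ, 1 ≤ n →
      R n = sD/((P:ℝ)-2) * ((1 + (b^2)^n - 2*b^n)/(1 - (b^2)^n)) := by
    intro n hn
    have hAt : a^n * b^n = 1 := by rw [← mul_pow, hab, one_pow]
    have ht0 : (0:ℝ) < b^n := pow_pos hbpos n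
    have ht1 : b^n < 1 := pow_lt_one₀ hbpos.le hb1 (by omega)
    have hAtsub : (0:ℝ) < a^n - b^n := by nlinarith [hAt, ht0, ht1]
    have hUn := key n
    have hUn1 := key (n+1)
    rw [pow_succ, pow_succ] at hUn1
    have hUpos : (0:ℝ) < (lucasU P 1 n : ℝ) := by nlinarith [hUn, hsDpos, hAtsub]
    have hb2n : (b^2)^n = (b^n)^2 := by rw [← pow_mul, mul_comm, pow_mul]
    have hS : ((P:ℝ) - 2) * (∑ k ∈ Finset.range (n+1), (lucasU P 1 k : ℝ))
        = (lucasU P 1 (n+1) : ℝ) - (lucasU P 1 n : ℝ) - 1 := by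
      exact_mod_cast hsum n
    have ht2' : (b^n)^2 < 1 := pow_lt_one₀ ht0.le ht1 two_ne_zero
    have ht2 : (0:ℝ) < 1 - (b^n)^2 := by linarith
    rw [hR n hn, hb2n]
    rw [div_mul_div_comm]
    rw [div_eq_div_iff hUpos.ne' (ne_of_gt (mul_pos (by linarith) ht2))]
    apply mul_left_cancel₀ hsDpos.ne'
    linear_combination 2*sD*(1-(b^n)^2)*hS + 2*(1-(b^n)^2)*hUn1
      + (-(1-(b^n)^2)*(P:ℝ) - sD*(1+(b^n)^2-2*b^n))*hUn
      + (1-(b^n)^2)*(a^n-b^n)*haddb + (1-(b^n)^2)*(a^n+b^n)*hsub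
      + 2*sD*(1-b^n)*hAt
  -- limits
  have hbb : b^2 < 1 := by nlinarith
  have htb : Filter.Tendsto (fun n : ℕ => b^n) Filter.atTop (nhds 0) :=
    tendsto_pow_atTop_nhds_zero_of_lt_one hbpos.le hb1
  have htb2 : Filter.Tendsto (fun n : ℕ => (b^2)^n) Filter.atTop (nhds 0) :=
    tendsto_pow_atTop_nhds_zero_of_lt_one (by positivity) hbb
  have hnum : Filter.Tendsto (fun n : ℕ => 1 + (b^2)^n - 2*b^n) Filter.atTop (nhds 1) := by
    have h1 := (htb2.const_add (1:ℝ)).sub (htb.const_mul 2)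
    simpa using h1
  have hden : Filter.Tendsto (fun n : ℕ => 1 - (b^2)^n) Filter.atTop (nhds 1) := by
    have h1 := (htb2.const_mul (-1:ℝ)).const_add (1:ℝ)
    simpa [sub_eq_add_neg] using h1
  have hmain : Filter.Tendsto
      (fun n : ℕ => sD/((P:ℝ)-2) * ((1 + (b^2)^n - 2*b^n)/(1 - (b^2)^n)))
      Filter.atTop (nhds (sD/((P:ℝ)-2) * (1/1))) :=
    (hnum.div hden one_ne_zero).const_mul _
  have hL : sD/((P:ℝ)-2) * (1/1) = Real.sqrt (((P:ℝ)+2)/((P:ℝ)-2)) := by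
    rw [hsDdef]
    have h1 : ((P:ℝ)+2)/((P:ℝ)-2) = ((P:ℝ)^2-4)/(((P:ℝ)-2)^2) := by
      rw [div_eq_div_iff (by linarith) (by nlinarith)]; ring
    rw [h1, Real.sqrt_div hD.le, Real.sqrt_sq (by linarith : (0:ℝ) ≤ (P:ℝ)-2)]
    ring
  rw [hL] at hmain
  refine Filter.Tendsto.congr' ?_ hmain
  filter_upwards [Filter.eventually_ge_atTop 1] with n hn
  exact (hform n hn).symm
end

section
/- For every natural number n ≥ 1, the strict inequality 2·∑_{k=0}^{n} F_{2k} − F_{2n} < √5 · F_{2n} holds in ℝ. (This is the isoperimetric inequality A_n^7 < √5·|S_n^7| for spheres in 7-uniform simplicial complexes, via |S_n^7| = 7·F_{2n} and A_n^7 = 2∑_{k=0}^n |S_k^7| − |S_n^7|.) -/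
lemma cassini (n : ℕ) :
    ((Nat.fib (n + 1) : ℤ))^2 = Nat.fib n * Nat.fib (n + 2) + (-1)^n := by
  induction n with
  | zero => simp
  | succ m ih =>
    have h : (Nat.fib (m + 2) : ℤ) = Nat.fib m + Nat.fib (m + 1) := by
      exact_mod_cast congrArg (Nat.cast (R := ℤ)) (Nat.fib_add_two (n := m))
    have h3 : (Nat.fib (m + 3) : ℤ) = Nat.fib (m + 1) + Nat.fib (m + 2) := by
      exact_mod_cast congrArg (Nat.cast (R := ℤ)) (Nat.fib_add_two (n := m + 1))
    linear_combination (-(Nat.fib (m+1) : ℤ)) * h3 - ih + (Nat.fib (m+2) : ℤ) * h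

lemma fib_even_sum (n : ℕ) :
    ∑ k ∈ Finset.range (n + 1), (Nat.fib (2 * k) : ℝ) = Nat.fib (2 * n + 1) - 1 := by
  induction n with
  | zero => simp
  | succ m ih =>
    rw [Finset.sum_range_succ, ih]
    have h : (Nat.fib (2 * (m + 1) + 1) : ℝ) = Nat.fib (2 * m + 1) + Nat.fib (2 * m + 2) := by
      have e : 2 * (m + 1) + 1 = 2 * m + 1 + 2 := by ring
      rw [e, Nat.fib_add_two]; push_cast; ring
    have h2 : (Nat.fib (2 * (m + 1)) : ℝ) = Nat.fib (2 * m) + Nat.fib (2 * m + 1) := by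
      have e : 2 * (m + 1) = 2 * m + 2 := by ring
      rw [e, Nat.fib_add_two]; push_cast; ring
    have h4 : (Nat.fib (2 * m + 2) : ℝ) = Nat.fib (2 * m) + Nat.fib (2 * m + 1) := by
      rw [Nat.fib_add_two]; push_cast; ring
    rw [h, h2]; linarith [h4]

theorem isoperimetric_seven_uniform :
    ∀ n : ℕ, 1 ≤ n →
      2 * ∑ k ∈ Finset.range (n + 1), (Nat.fib (2 * k) : ℝ) - (Nat.fib (2 * n) : ℝ) <
        Real.sqrt 5 * (Nat.fib (2 * n) : ℝ) := by
  intro N hn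
  rw [fib_even_sum]
  set a : ℝ := ((Nat.fib (2 * N - 1) : ℕ) : ℝ) with ha
  set b : ℝ := ((Nat.fib (2 * N) : ℕ) : ℝ) with hb
  set c : ℝ := ((Nat.fib (2 * N + 1) : ℕ) : ℝ) with hc
  have hidx : 2 * N - 1 + 1 = 2 * N := by omega
  have hrec : c = a + b := by
    have h2 : 2 * N - 1 + 2 = 2 * N + 1 := by omega
    have := Nat.fib_add_two (n := 2 * N - 1)
    rw [h2, hidx] at this
    rw [ha, hb, hc, this]; push_cast; ring
  -- Cassini at n = 2N-1 : b^2 = a * c - 1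
  have hcas : b ^ 2 = a * c - 1 := by
    have h := cassini (2 * N - 1)
    have h2 : 2 * N - 1 + 2 = 2 * N + 1 := by omega
    rw [hidx, h2] at h
    have hodd : Odd (2 * N - 1) := ⟨N - 1, by omega⟩
    rw [hodd.neg_one_pow] at h
    have h' : (Nat.fib (2 * N) : ℝ) ^ 2 = Nat.fib (2 * N - 1) * Nat.fib (2 * N + 1) + (-1 : ℝ) := by
      exact_mod_cast congrArg (Int.cast (R := ℝ)) h
    rw [ha, hb, hc]; linarith [h']
  have ha1 : (1 : ℝ) ≤ a := by
    rw [ha]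
    have : 1 ≤ Nat.fib (2 * N - 1) := Nat.fib_pos.mpr (by omega)
    exact_mod_cast this
  have hb1 : (1 : ℝ) ≤ b := by
    rw [hb]
    have : 1 ≤ Nat.fib (2 * N) := Nat.fib_pos.mpr (by omega)
    exact_mod_cast this
  have hL2 : (2 * c - b) ^ 2 = 5 * b ^ 2 + 4 := by
    rw [hrec]; nlinarith [hcas, hrec]
  have hs : Real.sqrt 5 ^ 2 = 5 := Real.sq_sqrt (by norm_num)
  have hs0 : (0 : ℝ) ≤ Real.sqrt 5 := Real.sqrt_nonneg 5
  have key : 2 * c - b - 2 < Real.sqrt 5 * b := by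
    nlinarith [hL2, hs, hs0, ha1, hb1, hrec,
      sq_nonneg (Real.sqrt 5 * b - (2 * c - b - 2)),
      sq_nonneg (Real.sqrt 5 * b + (2 * c - b - 2)),
      mul_nonneg hs0 (by linarith : (0:ℝ) ≤ b)]
  linarith [key]
end
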